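/- For every a > 1/4, the sequence n ↦ T_a^{∘n}(0) (the n-th iterate of T_a applied to 0) does not converge in ℝ∞; that is, the generalized continued fraction -a/(1 - a/(1 - a/⋯)) with constant coefficients a_i ≡ a > 1/4 diverges. -/

import Mathlib

open Filter Topology OnePoint Asymptotics

/-- The Möbius transformation `T_b(x) = -b/(x+1)` on `ℝ∞ = OnePoint ℝ`,
with `T_b(-1) = ∞` and `T_b(∞) = 0`. -/
noncomputable def T (b : ℝ) (z : OnePoint ℝ) : OnePoint ℝ :=
  Option.elim z ((0 : ℝ) : OnePoint ℝ)
    (fun x => if x = -1 then (∞ : OnePoint ℝ) else ((-b / (x + 1) : ℝ) : OnePoint ℝ))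

/-- The composition `T_{a 1} ∘ ⋯ ∘ T_{a n}`. -/
noncomputable def tauComp (a : ℕ → ℝ) : ℕ → (OnePoint ℝ → OnePoint ℝ)
  | 0 => id
  | n + 1 => tauComp a n ∘ T (a (n + 1))

/-- `τ_n = (T_{a 1} ∘ ⋯ ∘ T_{a n})(0)`. -/
noncomputable def tau (a : ℕ → ℝ) (n : ℕ) : OnePoint ℝ :=
  tauComp a n ((0 : ℝ) : OnePoint ℝ)

lemma T_coe (b : ℝ) (x : ℝ) :
    T b (x : OnePoint ℝ) =
      if x = -1 then (∞ : OnePoint ℝ) else ((-b / (x + 1) : ℝ) : OnePoint ℝ) := rfl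

lemma T_infty (b : ℝ) : T b (∞ : OnePoint ℝ) = ((0 : ℝ) : OnePoint ℝ) := rfl

lemma T_continuous (b : ℝ) (hb : b ≠ 0) : Continuous (T b) := by
  rw [continuous_iff_continuousAt]
  have hcoe : Continuous ((↑) : ℝ → OnePoint ℝ) := OnePoint.continuous_coe
  intro z
  induction z using OnePoint.rec with
  | infty =>
    rw [OnePoint.continuousAt_infty']
    have h1 : Tendsto (fun x : ℝ => ‖x + 1‖) (coclosedCompact ℝ) atTop := by
      rw [coclosedCompact_eq_cocompact]
      refine tendsto_atTop_mono (fun x => ?_) (tendsto_atTop_add_const_right _ (-1)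
        tendsto_norm_cocompact_atTop)
      have := norm_sub_norm_le x (-1 : ℝ)
      simp only [sub_neg_eq_add, norm_neg, norm_one] at this
      simpa using this
    have h2 : Tendsto (fun x : ℝ => -b / (x + 1)) (coclosedCompact ℝ) (𝓝 0) := by
      rw [tendsto_zero_iff_norm_tendsto_zero]
      have : Tendsto (fun x : ℝ => ‖(-b)‖ * ‖x + 1‖⁻¹) (coclosedCompact ℝ) (𝓝 (‖(-b)‖ * 0)) :=
        Tendsto.const_mul _ h1.inv_tendsto_atTop
      simpa [norm_div, div_eq_mul_inv] using this
    have heq : (T b ∘ (↑)) =ᶠ[coclosedCompact ℝ]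
        (fun x : ℝ => ((-b / (x + 1) : ℝ) : OnePoint ℝ)) := by
      rw [coclosedCompact_eq_cocompact]
      filter_upwards [(isCompact_singleton (x := (-1 : ℝ))).compl_mem_cocompact] with x hx
      simp only [Set.mem_compl_iff, Set.mem_singleton_iff] at hx
      simp [T_coe, hx]
    refine Tendsto.congr' heq.symm ?_
    exact (hcoe.continuousAt.tendsto.comp h2)
  | coe x =>
    rw [OnePoint.continuousAt_coe]
    by_cases hx : x = -1
    · subst hx
      have hval : (T b ∘ (↑)) (-1 : ℝ) = (∞ : OnePoint ℝ) := by simp [Function.comp, T_coe]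
      rw [ContinuousAt, hval]
      rw [← nhdsNE_sup_pure (-1 : ℝ)]
      refine Tendsto.sup ?_ ?_
      · -- punctured neighborhood: values are coe (-b/(x+1)), which → ∞
        have hcocl : Tendsto (fun x : ℝ => -b / (x + 1)) (𝓝[≠] (-1)) (coclosedCompact ℝ) := by
          rw [coclosedCompact_eq_cocompact, ← Metric.cobounded_eq_cocompact, ← comap_norm_atTop]
          rw [tendsto_comap_iff]
          have h1 : Tendsto (fun x : ℝ => x + 1) (𝓝[≠] (-1)) (𝓝[≠] 0) := by
            apply tendsto_nhdsWithin_of_tendsto_nhds_of_eventually_within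
            · have : Tendsto (fun x : ℝ => x + 1) (𝓝 (-1)) (𝓝 (-1 + 1)) :=
                (continuous_id.add continuous_const).continuousAt
              simpa using this.mono_left nhdsWithin_le_nhds
            · filter_upwards [self_mem_nhdsWithin] with x hx
              simp only [Set.mem_compl_iff, Set.mem_singleton_iff] at hx ⊢
              intro h; exact hx (by linarith)
          have h2 : Tendsto (fun y : ℝ => ‖y‖) (𝓝[≠] (0:ℝ)) (𝓝[>] 0) := by
            apply tendsto_nhdsWithin_of_tendsto_nhds_of_eventually_within
            · simpa using (continuous_norm.tendsto (0:ℝ)).mono_left nhdsWithin_le_nhds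
            · filter_upwards [self_mem_nhdsWithin] with y hy
              simp only [Set.mem_compl_iff, Set.mem_singleton_iff] at hy
              simpa using norm_pos_iff.mpr hy
          have h3 : Tendsto (fun y : ℝ => ‖y‖⁻¹) (𝓝[≠] (0:ℝ)) atTop :=
            h2.inv_tendsto_nhdsGT_zero
          have h4 : Tendsto (fun x : ℝ => ‖b‖ * ‖x + 1‖⁻¹) (𝓝[≠] (-1)) atTop :=
            (h3.comp h1).const_mul_atTop (norm_pos_iff.mpr hb)
          refine h4.congr (fun x => ?_)
          simp [norm_div, div_eq_mul_inv]
        have heq : (T b ∘ (↑)) =ᶠ[𝓝[≠] (-1:ℝ)]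
            (fun x : ℝ => ((-b / (x + 1) : ℝ) : OnePoint ℝ)) := by
          filter_upwards [self_mem_nhdsWithin] with x hx
          simp only [Set.mem_compl_iff, Set.mem_singleton_iff] at hx
          simp [T_coe, hx]
        exact Tendsto.congr' heq.symm (tendsto_coe_infty.comp hcocl)
      · rw [tendsto_pure_left]
        intro s hs
        have hInf : T b ((-1 : ℝ) : OnePoint ℝ) = ∞ := by simp [T_coe]
        simpa [Function.comp, hInf] using mem_of_mem_nhds hs
    · have heq : (T b ∘ (↑)) =ᶠ[𝓝 x] (fun y : ℝ => ((-b / (y + 1) : ℝ) : OnePoint ℝ)) := by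
        filter_upwards [isOpen_compl_singleton.mem_nhds (by simpa using hx :
          x ∈ ({-1}ᶜ : Set ℝ))] with y hy
        simp only [Set.mem_compl_iff, Set.mem_singleton_iff] at hy
        simp [T_coe, hy]
      have hx1 : x + 1 ≠ 0 := fun h => hx (by linarith)
      have hcont : ContinuousAt (fun y : ℝ => -b / (y + 1)) x :=
        ContinuousAt.div continuousAt_const (continuousAt_id.add continuousAt_const) hx1
      rw [ContinuousAt]
      have hval : (T b ∘ (↑)) x = ((-b / (x + 1) : ℝ) : OnePoint ℝ) := by simp [T_coe, hx]
      rw [hval]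
      exact Tendsto.congr' heq.symm (hcoe.continuousAt.tendsto.comp hcont)

/-- For every `a > 1/4` the sequence `n ↦ T_a^{∘n}(0)` does not converge in `ℝ∞`: the
continued fraction with constant coefficients `a_i ≡ a > 1/4` diverges. -/
theorem constant_coefficients_diverge (a : ℝ) (ha : 1 / 4 < a) :
    ¬ ∃ x : OnePoint ℝ, Tendsto (fun n => (T a)^[n] ((0 : ℝ) : OnePoint ℝ)) atTop (𝓝 x) := by
  rintro ⟨x, hx⟩
  have ha0 : a ≠ 0 := by positivity
  -- the shifted sequence converges to both x and T a x
  have h1 : Tendsto (fun n => (T a)^[n + 1] ((0 : ℝ) : OnePoint ℝ)) atTop (𝓝 x) :=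
    hx.comp (tendsto_add_atTop_nat 1)
  have h2 : Tendsto (fun n => (T a)^[n + 1] ((0 : ℝ) : OnePoint ℝ)) atTop (𝓝 (T a x)) := by
    have := ((T_continuous a ha0).continuousAt (x := x)).tendsto.comp hx
    refine this.congr fun n => ?_
    simp [Function.iterate_succ_apply', Function.comp]
  have hfix : T a x = x := tendsto_nhds_unique h2 h1
  -- but T a has no fixed point
  induction x using OnePoint.rec with
  | infty => exact (OnePoint.coe_ne_infty (0 : ℝ)) hfix
  | coe r =>
    rw [T_coe] at hfix
    by_cases hr : r = -1
    · rw [if_pos hr] at hfix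
      exact (OnePoint.coe_ne_infty r) hfix.symm
    · rw [if_neg hr] at hfix
      have hval : -a / (r + 1) = r := OnePoint.coe_injective hfix
      have hr1 : r + 1 ≠ 0 := fun h => hr (by linarith)
      have : -a = r * (r + 1) := by field_simp at hval; linarith
      nlinarith [sq_nonneg (r + 1 / 2)]
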